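/- Let r ≥ 2 and k ≥ 2^r be integers. Then every r-partite r-graph satisfying the (r,k)-cover property has a transversal cover; in particular, its cover number is at most r. -/

import Mathlib

/-- A set of vertices `T` covers a hypergraph with edge family `E` if it meets every edge. -/
def IsCover {V : Type*} (E : Set (Set V)) (T : Set V) : Prop :=
  ∀ e ∈ E, (e ∩ T).Nonempty

/-- The cover number of a hypergraph: minimum size of a cover. -/
noncomputable def coverNumber {V : Type*} (E : Set (Set V)) : ℕ :=
  sInf {n | ∃ T : Set V, T.ncard = n ∧ IsCover E T}

/-- The `(k,ℓ)`-cover property: any at most `k` edges have a cover of size at most `ℓ`. -/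
def CoverProperty {V : Type*} (E : Set (Set V)) (k ℓ : ℕ) : Prop :=
  ∀ S ⊆ E, S.ncard ≤ k → ∃ T : Set V, T.ncard ≤ ℓ ∧ IsCover S T

/-- `E` is an `r`-partite `r`-graph w.r.t. the partition `part`. -/
def IsPartite {V : Type*} (r : ℕ) (part : V → Fin r) (E : Set (Set V)) : Prop :=
  ∀ e ∈ E, ∀ i : Fin r, (e ∩ part ⁻¹' {i}).ncard = 1

/-- A transversal cover: a cover containing exactly one vertex from each part. -/
def IsTransversalCover {V : Type*} (r : ℕ) (part : V → Fin r) (E : Set (Set V))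
    (T : Set V) : Prop :=
  IsCover E T ∧ ∀ i : Fin r, (T ∩ part ⁻¹' {i}).ncard = 1

/-- The `(r,k)`-cover property: any at most `k` edges have a transversal cover. -/
def PartiteCoverProperty {V : Type*} (r : ℕ) (part : V → Fin r) (E : Set (Set V))
    (k : ℕ) : Prop :=
  ∀ S ⊆ E, S.ncard ≤ k → ∃ T : Set V, IsTransversalCover r part S T

/-- The spanning subgraph of `G` consisting of the edges of colour `i`. -/
def colorSubgraph {V : Type*} (G : SimpleGraph V) {r : ℕ} (c : Sym2 V → Fin r)
    (i : Fin r) : SimpleGraph V where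
  Adj u v := G.Adj u v ∧ c s(u, v) = i
  symm := ⟨fun u v h => ⟨h.1.symm, by rw [Sym2.eq_swap]; exact h.2⟩⟩
  loopless := ⟨fun v h => G.loopless.1 v h.1⟩

/-!
Take an inclusion-minimal subfamily `S` with no transversal cover. For `e ∈ S`, a transversal
cover of `S \ {e}` must miss `e`; reading `e` and that cover as tuples `f e, x e : V^r` (one vertex
per part), `x e` differs from `f e` in every coordinate but agrees with every other `f e'` in some
coordinate. After embedding `V` into a field, the vectors `(∏ i ∈ A, f e i)_{A ⊆ [r]}` pair with
`((-1)^|A| ∏ i ∉ A, x e' i)_A` to `∏ i, (x e' i - f e i)`, which vanishes iff `e ≠ e'`. So they are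
linearly independent in a space of dimension `2^r`, whence `|S| ≤ 2^r ≤ k`, and the cover
property gives `S` a transversal cover after all.
-/

open Finset Matrix

lemma dotProduct_prod_prod_compl {K n : Type*} [CommRing K] [Fintype n] [DecidableEq n]
    (g y : n → K) :
    ((fun A : Finset n => ∏ i ∈ A, g i) ⬝ᵥ fun A => (-1) ^ #A * ∏ i ∈ Aᶜ, y i) =
      ∏ i, (y i - g i) := by
  simp_rw [sub_eq_neg_add, prod_add, powerset_univ, prod_neg, dotProduct, compl_eq_univ_sdiff]
  exact sum_congr rfl fun A _ => by ring

lemma linearIndependent_of_dotProduct_eq_zero {K ι m : Type*} [Field K] [Fintype m]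
    (v w : ι → m → K) (hne : ∀ j j', j ≠ j' → v j' ⬝ᵥ w j = 0)
    (hself : ∀ j, v j ⬝ᵥ w j ≠ 0) : LinearIndependent K v := by
  classical
  refine linearIndependent_iff'.2 fun s c hc j hj => ?_
  have hdot := congrArg (· ⬝ᵥ w j) hc
  simp only [sum_dotProduct, smul_dotProduct, smul_eq_mul, zero_dotProduct] at hdot
  rwa [sum_eq_single_of_mem j hj fun j' _ hj' => by rw [hne j j' hj'.symm, mul_zero],
    mul_eq_zero, or_iff_left (hself j)] at hdot

theorem natCard_le_two_pow_of_forall_ne_of_exists_eq {K ι n : Type*} [Field K] [Finite ι]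
    [Fintype n] (f x : ι → n → K) (hself : ∀ j i, x j i ≠ f j i)
    (hcross : ∀ j j', j ≠ j' → ∃ i, x j i = f j' i) :
    Nat.card ι ≤ 2 ^ Fintype.card n := by
  classical
  cases nonempty_fintype ι
  have hli := linearIndependent_of_dotProduct_eq_zero (fun j A => ∏ i ∈ A, f j i)
    (fun j A => (-1) ^ #A * ∏ i ∈ Aᶜ, x j i)
    (fun j j' hjj' => by
      obtain ⟨i, hi⟩ := hcross j j' hjj'
      rw [dotProduct_prod_prod_compl]
      exact prod_eq_zero (mem_univ i) (sub_eq_zero.2 hi))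
    (fun j => by
      rw [dotProduct_prod_prod_compl]
      exact prod_ne_zero_iff.2 fun i _ => sub_ne_zero.2 (hself j i))
  simpa [Module.finrank_fintype_fun_eq_card, Fintype.card_finset] using
    hli.fintype_card_le_finrank

lemma inter_nonempty_iff_exists_eq {V ι : Type*} {part : V → ι} {s t : Set V} {g h : ι → V}
    (hs : ∀ i, s ∩ part ⁻¹' {i} = {g i}) (ht : ∀ i, t ∩ part ⁻¹' {i} = {h i}) :
    (s ∩ t).Nonempty ↔ ∃ i, g i = h i := by
  constructor
  · rintro ⟨v, hvs, hvt⟩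
    refine ⟨part v, ?_⟩
    rw [← Set.mem_singleton_iff.1 (hs (part v) ▸ ⟨hvs, rfl⟩ : v ∈ ({g (part v)} : Set V)),
      ← Set.mem_singleton_iff.1 (ht (part v) ▸ ⟨hvt, rfl⟩ : v ∈ ({h (part v)} : Set V))]
  · rintro ⟨i, hi⟩
    have hgs : g i ∈ s ∩ part ⁻¹' {i} := (hs i).symm ▸ rfl
    have hht : h i ∈ t ∩ part ⁻¹' {i} := (ht i).symm ▸ rfl
    exact ⟨g i, hgs.1, hi ▸ hht.1⟩

lemma IsTransversalCover.ncard_le {V : Type*} {r : ℕ} {part : V → Fin r} {E : Set (Set V)}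
    {T : Set V} (hT : IsTransversalCover r part E T) : T.ncard ≤ r := by
  have hinj : Set.InjOn part T := fun a ha b hb hab => by
    obtain ⟨c, hc⟩ := Set.ncard_eq_one.1 (hT.2 (part a))
    have ha' : a ∈ T ∩ part ⁻¹' {part a} := ⟨ha, rfl⟩
    have hb' : b ∈ T ∩ part ⁻¹' {part a} := ⟨hb, hab.symm⟩
    rw [hc] at ha' hb'
    rw [ha', hb']
  simpa using Set.ncard_le_ncard_of_injOn part (fun a _ => Set.mem_univ (part a)) hinj
    Set.finite_univ

lemma coverNumber_le_ncard {V : Type*} {E : Set (Set V)} {T : Set V} (hT : IsCover E T) :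
    coverNumber E ≤ T.ncard :=
  Nat.sInf_le ⟨T, rfl, hT⟩

theorem ncard_le_two_pow_of_forall_transversalCover_diff {V : Type*} [Finite V] {r : ℕ}
    {part : V → Fin r} {S : Set (Set V)} (hpart : IsPartite r part S)
    (hS : ¬∃ T, IsTransversalCover r part S T)
    (hcrit : ∀ e ∈ S, ∃ T, IsTransversalCover r part (S \ {e}) T) : S.ncard ≤ 2 ^ r := by
  choose f hf using fun (e : S) i => Set.ncard_eq_one.1 (hpart e e.2 i)
  choose T hT using fun e : S => hcrit e e.2
  choose x hx using fun (e : S) i => Set.ncard_eq_one.1 ((hT e).2 i)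
  have hself : ∀ e i, x e i ≠ f e i := fun e i heq => hS ⟨T e, fun e' he' => by
    by_cases h : e' = e
    · exact h ▸ (inter_nonempty_iff_exists_eq (hf e) (hx e)).2 ⟨i, heq.symm⟩
    · exact (hT e).1 e' ⟨he', h⟩, (hT e).2⟩
  have hcross : ∀ e e', e ≠ e' → ∃ i, x e i = f e' i := fun e e' hne => by
    obtain ⟨i, hi⟩ := (inter_nonempty_iff_exists_eq (hf e') (hx e)).1
      ((hT e).1 e' ⟨e'.2, fun h => hne (Subtype.ext h).symm⟩)
    exact ⟨i, hi.symm⟩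
  obtain ⟨t, ht⟩ := Countable.exists_injective_nat V
  rw [← Nat.card_coe_set_eq, ← Fintype.card_fin r]
  exact natCard_le_two_pow_of_forall_ne_of_exists_eq (K := ℚ) (fun e i => t (f e i))
    (fun e i => t (x e i)) (fun e i h => hself e i (ht (Nat.cast_injective h)))
    (fun e e' hne => (hcross e e' hne).imp fun i hi => by rw [hi])

theorem stmt14_general (r k : ℕ) (hk : 2 ^ r ≤ k)
    {V : Type*} [Fintype V] (part : V → Fin r) (E : Set (Set V))
    (hpart : IsPartite r part E) (hprop : PartiteCoverProperty r part E k) :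
    (∃ T : Set V, IsTransversalCover r part E T) ∧ coverNumber E ≤ r := by
  have hex : ∃ T, IsTransversalCover r part E T := by
    by_contra hE
    obtain ⟨S, hSE, hS⟩ := exists_minimal_le_of_wellFoundedLT
      (fun S => ¬∃ T, IsTransversalCover r part S T) E hE
    have hcrit : ∀ e ∈ S, ∃ T, IsTransversalCover r part (S \ {e}) T := fun e he =>
      not_not.1 (hS.not_prop_of_lt (Set.sdiff_singleton_ssubset.2 he))
    have hcard := ncard_le_two_pow_of_forall_transversalCover_diff
      (fun e he => hpart e (hSE he)) hS.prop hcrit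
    exact hS.prop (hprop S hSE (hcard.trans hk))
  obtain ⟨T, hT⟩ := hex
  exact ⟨⟨T, hT⟩, (coverNumber_le_ncard hT.1).trans hT.ncard_le⟩

/-- for `k ≥ 2^r`, every `r`-partite `r`-graph with the `(r,k)`-cover
property has a transversal cover; in particular its cover number is at most `r`. -/
theorem stmt14 (r k : ℕ) (hr : 2 ≤ r) (hk : 2 ^ r ≤ k)
    {V : Type*} [Fintype V] (part : V → Fin r) (E : Set (Set V))
    (hpart : IsPartite r part E) (hprop : PartiteCoverProperty r part E k) :
    (∃ T : Set V, IsTransversalCover r part E T) ∧ coverNumber E ≤ r :=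
  stmt14_general r k hk part E hpart hprop
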